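/- arXiv:2603.11648 — 3 statements merged into one kernel-verified Lean document; each statement's English description precedes it below -/
import Mathlib

section
/- For a visibly recursive automaton A, for all words cwr with c a call symbol, w well-matched, and r a return symbol, and all states p, q of A: there is a recursive run ⟨q, ε⟩ →^{cwr} ⟨p, ε⟩ if and only if there exists a procedural symbol J with f(J) = ⟨c, r⟩ such that q →^J p is a transition of A and w belongs to the recursive language L(A^J). -/
/-!
A run on a well-matched word neither pops below nor leaves anything on the stack and ends in
the component where it started; moreover it only ever inspects the part of the stack it pushed
itself, so it can be replayed on the empty stack and on top of any other stack. By induction on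
well-matchedness this holds for every well-matched word. A run on `c w r` from an empty stack
therefore calls into some `A^J` with `f_call(J) = c`, pushing the target `p` of `q →^J p`, runs on
`w` inside `A^J` back to stack `[p]`, and returns from a final state of `A^J`, so `f_ret(J) = r`.
-/

/-- A symbol of a pushdown alphabet: internal, call, or return. -/
inductive VSym (I C R : Type) : Type
  | int  : I → VSym I C R
  | call : C → VSym I C R
  | ret  : R → VSym I C R

/-- The set of well-matched words over a pushdown alphabet. -/
inductive WellMatched {I C R : Type} : List (VSym I C R) → Prop
  | internal (u : List I) : WellMatched (u.map VSym.int)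
  | bracket {w : List (VSym I C R)} (c : C) (r : R) :
      WellMatched w → WellMatched (VSym.call c :: w ++ [VSym.ret r])
  | concat {w₁ w₂ : List (VSym I C R)} :
      WellMatched w₁ → WellMatched w₂ → WellMatched (w₁ ++ w₂)

def VSym.isCall {I C R : Type} : VSym I C R → Bool
  | .call _ => true
  | _ => false

def VSym.isRet {I C R : Type} : VSym I C R → Bool
  | .ret _ => true
  | _ => false

/-- The depth of a word: the maximal excess of call symbols over return symbols
in any prefix (the deepest level of unmatched calls at any point). -/
def VSym.depth {I C R : Type} (w : List (VSym I C R)) : ℕ :=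
  (w.inits.map fun p => p.countP VSym.isCall - p.countP VSym.isRet).foldr max 0

/-- A visibly recursive automaton: a family of finite automata over the internal
and procedural symbols, identified by the component map `comp` (`none` denotes the
starting automaton `A^S`, `some J` the component automaton `A^J`), together with a
linking function `link` assigning to each procedural symbol a call/return pair.
Transitions of each component automaton stay within that component. -/
structure VRA (I C R P Q : Type) where
  /-- the linking function `f : Σ_proc → Σ_call × Σ_ret` -/
  link : P → C × R
  /-- the component automaton each state belongs to (`none` = starting automaton) -/
  comp : Q → Option P
  init : Q → Prop
  final : Q → Prop
  intTrans : Q → I → Q → Prop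
  procTrans : Q → P → Q → Prop
  intTrans_comp : ∀ ⦃q a p⦄, intTrans q a p → comp p = comp q
  procTrans_comp : ∀ ⦃q J p⦄, procTrans q J p → comp p = comp q

namespace VRA

variable {I C R P Q : Type}

/-- One step of a recursive run, on configurations (state, stack of states). -/
inductive Step (A : VRA I C R P Q) : Q × List Q → VSym I C R → Q × List Q → Prop
  | int {q q' : Q} {σ : List Q} {a : I} :
      A.intTrans q a q' → Step A (q, σ) (VSym.int a) (q', σ)
  | call {q q' p : Q} {σ : List Q} {J : P} {c : C} :
      A.procTrans q J p → (A.link J).1 = c → A.comp q' = some J → A.init q' →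
      Step A (q, σ) (VSym.call c) (q', p :: σ)
  | ret {q p : Q} {σ : List Q} {J : P} {r : R} :
      A.comp q = some J → A.final q → (A.link J).2 = r →
      Step A (q, p :: σ) (VSym.ret r) (p, σ)

/-- Recursive runs of a VRA. -/
inductive Run (A : VRA I C R P Q) : Q × List Q → List (VSym I C R) → Q × List Q → Prop
  | nil (cfg : Q × List Q) : Run A cfg [] cfg
  | cons {cfg₁ cfg₂ cfg₃ : Q × List Q} {a : VSym I C R} {w : List (VSym I C R)} :
      Step A cfg₁ a cfg₂ → Run A cfg₂ w cfg₃ → Run A cfg₁ (a :: w) cfg₃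

/-- The recursive language of the component automaton `A^J` (`J = none` is the
starting automaton): words with a recursive run from an initial state of the
component with empty stack to a final state of the component with empty stack. -/
def RecLang (A : VRA I C R P Q) (J : Option P) : Set (List (VSym I C R)) :=
  {w | ∃ qi qf, A.comp qi = J ∧ A.init qi ∧ A.comp qf = J ∧ A.final qf ∧
    Run A (qi, []) w (qf, [])}

/-- The language of a VRA: the recursive language of its starting automaton. -/
def Lang (A : VRA I C R P Q) : Set (List (VSym I C R)) := A.RecLang none

/-- Regular runs: runs of the component automata viewed as ordinary finite
automata over the alphabet `Σ_int ∪ Σ_proc`. -/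
inductive RegRun (A : VRA I C R P Q) : Q → List (I ⊕ P) → Q → Prop
  | nil (q : Q) : RegRun A q [] q
  | int {q q' p : Q} {a : I} {w : List (I ⊕ P)} :
      A.intTrans q a q' → RegRun A q' w p → RegRun A q (Sum.inl a :: w) p
  | proc {q q' p : Q} {J : P} {w : List (I ⊕ P)} :
      A.procTrans q J q' → RegRun A q' w p → RegRun A q (Sum.inr J :: w) p

/-- The regular language of the component automaton `A^J`, over `Σ_int ∪ Σ_proc`. -/
def RegLang (A : VRA I C R P Q) (J : Option P) : Set (List (I ⊕ P)) :=
  {w | ∃ qi qf, A.comp qi = J ∧ A.init qi ∧ A.comp qf = J ∧ A.final qf ∧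
    RegRun A qi w qf}

/-- A VRA is codeterministic if component automata linked to the same call/return
pair have pairwise disjoint recursive languages. -/
def Codeterministic (A : VRA I C R P Q) : Prop :=
  ∀ J J' : P, J ≠ J' → A.link J = A.link J' →
    A.RecLang (some J) ∩ A.RecLang (some J') = ∅

/-- A VRA is complete if every state has an outgoing transition on every symbol of
`Σ_int ∪ Σ_proc`, and for every call/return pair the recursive languages of the
linked component automata cover all well-matched words. -/
def Complete (A : VRA I C R P Q) : Prop :=
  (∀ (q : Q) (a : I), ∃ p, A.intTrans q a p) ∧
  (∀ (q : Q) (J : P), ∃ p, A.procTrans q J p) ∧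
  (∀ (c : C) (r : R),
    (⋃ J ∈ {J : P | A.link J = (c, r)}, A.RecLang (some J)) = {w | WellMatched w})

/-- A VRA is deterministic if every component automaton (including the starting
one) has a unique initial state and deterministic transitions, and procedural
transitions from a common state on procedural symbols with the same call symbol
agree on the procedural symbol. -/
def Deterministic (A : VRA I C R P Q) : Prop :=
  (∀ J : Option P, ∃! q, A.comp q = J ∧ A.init q) ∧
  (∀ q a p p', A.intTrans q a p → A.intTrans q a p' → p = p') ∧
  (∀ q J p p', A.procTrans q J p → A.procTrans q J p' → p = p') ∧
  (∀ q J J' p p', A.procTrans q J p → A.procTrans q J' p' →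
    (A.link J).1 = (A.link J').1 → J = J')

/-- All component automata of the VRA are complete DFAs: a unique initial state in
each component and exactly one outgoing transition per state and symbol. -/
def AllCompleteDFA (A : VRA I C R P Q) : Prop :=
  (∀ J : Option P, ∃! q, A.comp q = J ∧ A.init q) ∧
  (∀ (q : Q) (a : I), ∃! p, A.intTrans q a p) ∧
  (∀ (q : Q) (J : P), ∃! p, A.procTrans q J p)

/-- The size of a VRA: number of states plus number of transitions. -/
noncomputable def size (A : VRA I C R P Q) : ℕ :=
  Nat.card Q + Nat.card {t : Q × I × Q // A.intTrans t.1 t.2.1 t.2.2}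
    + Nat.card {t : Q × P × Q // A.procTrans t.1 t.2.1 t.2.2}

end VRA

namespace VRA

variable {I C R P Q : Type} {A : VRA I C R P Q}

theorem Run.append {cfg₁ cfg₂ cfg₃ : Q × List Q} {w₁ w₂ : List (VSym I C R)}
    (h₁ : A.Run cfg₁ w₁ cfg₂) (h₂ : A.Run cfg₂ w₂ cfg₃) : A.Run cfg₁ (w₁ ++ w₂) cfg₃ := by
  induction h₁ with
  | nil => exact h₂
  | cons s _ ih => exact .cons s (ih h₂)

theorem run_append_iff {cfg₁ cfg₃ : Q × List Q} {w₁ w₂ : List (VSym I C R)} :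
    A.Run cfg₁ (w₁ ++ w₂) cfg₃ ↔ ∃ cfg₂, A.Run cfg₁ w₁ cfg₂ ∧ A.Run cfg₂ w₂ cfg₃ := by
  refine ⟨fun h => ?_, fun ⟨_, h₁, h₂⟩ => h₁.append h₂⟩
  induction w₁ generalizing cfg₁ with
  | nil => exact ⟨cfg₁, .nil _, h⟩
  | cons a w ih =>
    obtain _ | ⟨s, h⟩ := h
    obtain ⟨cfg₂, h₁, h₂⟩ := ih h
    exact ⟨cfg₂, .cons s h₁, h₂⟩

theorem run_singleton_iff {cfg cfg' : Q × List Q} {a : VSym I C R} :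
    A.Run cfg [a] cfg' ↔ A.Step cfg a cfg' := by
  refine ⟨fun h => ?_, fun s => .cons s (.nil _)⟩
  obtain _ | ⟨s, _ | _⟩ := h
  exact s

theorem Step.append_stack {q p : Q} {σ σ' : List Q} {a : VSym I C R}
    (h : A.Step (q, σ) a (p, σ')) (τ : List Q) : A.Step (q, σ ++ τ) a (p, σ' ++ τ) := by
  cases h with
  | int ht => exact .int ht
  | call ht hc hcomp hinit => exact .call ht hc hcomp hinit
  | ret hcomp hfin hr => exact .ret hcomp hfin hr

theorem Run.append_stack {q p : Q} {σ σ' : List Q} {w : List (VSym I C R)}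
    (h : A.Run (q, σ) w (p, σ')) (τ : List Q) : A.Run (q, σ ++ τ) w (p, σ' ++ τ) := by
  generalize hx : (q, σ) = x, hy : (p, σ') = y at h
  induction h generalizing q σ with
  | nil => cases hx; cases hy; exact .nil _
  | cons s _ ih =>
    subst hx hy
    exact .cons (s.append_stack τ) (ih rfl rfl)

variable (A) in
def Balanced (w : List (VSym I C R)) : Prop :=
  ∀ ⦃q p : Q⦄ ⦃σ σ' : List Q⦄, A.Run (q, σ) w (p, σ') →
    σ' = σ ∧ A.comp p = A.comp q ∧ A.Run (q, []) w (p, [])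

theorem balanced_nil : A.Balanced [] := by
  rintro q p σ σ' ⟨⟩
  exact ⟨rfl, rfl, .nil _⟩

theorem balanced_int (a : I) : A.Balanced [VSym.int a] := by
  intro q p σ σ' h
  obtain ⟨ht⟩ := run_singleton_iff.mp h
  exact ⟨rfl, A.intTrans_comp ht, run_singleton_iff.mpr (.int ht)⟩

theorem Balanced.append {w₁ w₂ : List (VSym I C R)} (h₁ : A.Balanced w₁) (h₂ : A.Balanced w₂) :
    A.Balanced (w₁ ++ w₂) := by
  intro q p σ σ' h
  obtain ⟨⟨q', σ''⟩, hr₁, hr₂⟩ := run_append_iff.mp h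
  obtain ⟨rfl, hc₁, hr₁'⟩ := h₁ hr₁
  obtain ⟨rfl, hc₂, hr₂'⟩ := h₂ hr₂
  exact ⟨rfl, hc₂.trans hc₁, hr₁'.append hr₂'⟩

theorem balanced_map_int (u : List I) : A.Balanced (u.map VSym.int) := by
  induction u with
  | nil => exact balanced_nil
  | cons a u ih => exact (balanced_int a).append ih

theorem run_bracket_iff_of_balanced {c : C} {r : R} {w : List (VSym I C R)} (hw : A.Balanced w)
    {q p : Q} {σ σ' : List Q} :
    A.Run (q, σ) (VSym.call c :: w ++ [VSym.ret r]) (p, σ') ↔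
      σ' = σ ∧ ∃ J : P, A.link J = (c, r) ∧ A.procTrans q J p ∧ w ∈ A.RecLang (some J) := by
  constructor
  · rintro (_ | ⟨s, h⟩)
    cases s with | call ht hc hcomp hinit => ?_
    obtain ⟨⟨qf, σ''⟩, hbody, hret⟩ := run_append_iff.mp h
    obtain ⟨rfl, hcomp_qf, hrun⟩ := hw hbody
    rw [hcomp] at hcomp_qf
    cases run_singleton_iff.mp hret with | ret hcomp' hfin hr => ?_
    obtain rfl : _ = _ := Option.some.inj (hcomp'.symm.trans hcomp_qf)
    exact ⟨rfl, _, Prod.ext hc hr, ht, _, _, hcomp, hinit, hcomp_qf, hfin, hrun⟩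
  · rintro ⟨rfl, J, hlink, ht, qi, qf, hci, hii, hcf, hff, hrun⟩
    refine .cons (.call ht (by rw [hlink]) hci hii) ((hrun.append_stack _).append ?_)
    exact run_singleton_iff.mpr (.ret hcf hff (by rw [hlink]))

theorem Balanced.bracket {w : List (VSym I C R)} (hw : A.Balanced w) (c : C) (r : R) :
    A.Balanced (VSym.call c :: w ++ [VSym.ret r]) := by
  intro q p σ σ' h
  obtain ⟨rfl, J, hlink, ht, hJ⟩ := (run_bracket_iff_of_balanced hw).mp h
  exact ⟨rfl, A.procTrans_comp ht, (run_bracket_iff_of_balanced hw).mpr ⟨rfl, J, hlink, ht, hJ⟩⟩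

theorem _root_.WellMatched.balanced {w : List (VSym I C R)} (hw : WellMatched w) : A.Balanced w := by
  induction hw with
  | internal u => exact balanced_map_int u
  | bracket c r _ ih => exact ih.bracket c r
  | concat _ _ ih₁ ih₂ => exact ih₁.append ih₂

end VRA

/-- for a call symbol `c`, a well-matched word `w` and a return
symbol `r`, there is a recursive run `⟨q,ε⟩ →^{cwr} ⟨p,ε⟩` iff there is a
procedural symbol `J` with `f(J) = ⟨c,r⟩`, a transition `q →^J p`, and
`w ∈ L(A^J)`. -/
theorem VRA.run_bracket_iff {I C R P Q : Type} (A : VRA I C R P Q)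
    {c : C} {r : R} {w : List (VSym I C R)} (hw : WellMatched w) (q p : Q) :
    A.Run (q, []) (VSym.call c :: w ++ [VSym.ret r]) (p, []) ↔
      ∃ J : P, A.link J = (c, r) ∧ A.procTrans q J p ∧ w ∈ A.RecLang (some J) :=
  (run_bracket_iff_of_balanced hw.balanced).trans (and_iff_right rfl)
end

section
/- Let A be a VRA such that for all c ∈ Σ_call, r ∈ Σ_ret, and all distinct J, J' ∈ Σ_proc^⟨c,r⟩, the regular languages satisfy L_reg(A^J) ∩ L_reg(A^{J'}) = ∅. Then the recursive languages are also pairwise disjoint: for all distinct J, J' ∈ Σ_proc^⟨c,r⟩, L(A^J) ∩ L(A^{J'}) = ∅. -/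
/-! Two recursive runs over the same word `w`, each from an empty stack to an empty stack,
read the same internal symbols and call the same components: at a top-level call
`c w₁ r` the block `w₁` is determined by the word (it ends at the first return that
would empty the stack), and the two components called on it are linked to `⟨c, r⟩` and
both accept `w₁`. By induction on the length, regular disjointness applied to the
shorter word `w₁` forces the two components to coincide. Hence both runs flatten to one
common word of `L_reg`, and regular disjointness applies once more. -/

namespace VRA

variable {I C R P Q : Type} {A : VRA I C R P Q}

theorem Run.exists_of_append {cfg cfg' : Q × List Q} :
    ∀ {u v : List (VSym I C R)}, Run A cfg (u ++ v) cfg' →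
      ∃ cfgm, Run A cfg u cfgm ∧ Run A cfgm v cfg'
  | [], _, h => ⟨cfg, .nil cfg, h⟩
  | _ :: _, _, .cons hs hr =>
    let ⟨cfgm, hu, hv⟩ := Run.exists_of_append hr
    ⟨cfgm, .cons hs hu, hv⟩

theorem Run.length_add_countP_isCall {cfg cfg' : Q × List Q} {w : List (VSym I C R)}
    (h : Run A cfg w cfg') :
    cfg.2.length + w.countP VSym.isCall = cfg'.2.length + w.countP VSym.isRet := by
  induction h with
  | nil => rfl
  | cons hs _ ih =>
    cases hs <;> simp [List.countP_cons, VSym.isCall, VSym.isRet] at ih ⊢ <;> omega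

/-- The outermost pending return state, or the current state if none is pending: its
component never changes along a run. -/
def bottom (cfg : Q × List Q) : Q := cfg.2.getLast?.getD cfg.1

theorem Step.comp_bottom {cfg cfg' : Q × List Q} {a : VSym I C R} (h : Step A cfg a cfg') :
    A.comp (bottom cfg') = A.comp (bottom cfg) := by
  cases h with
  | @int q q' σ _ ht =>
    unfold bottom
    cases σ.getLast? <;> simp [A.intTrans_comp ht]
  | @call q _ p σ _ _ ht =>
    simp only [bottom, List.getLast?_cons, Option.getD_some]
    cases σ.getLast? <;> simp [A.procTrans_comp ht]
  | ret => simp [bottom, List.getLast?_cons]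

theorem Run.comp_bottom {cfg cfg' : Q × List Q} {w : List (VSym I C R)} (h : Run A cfg w cfg') :
    A.comp (bottom cfg') = A.comp (bottom cfg) := by
  induction h with
  | nil => rfl
  | cons hs _ ih => exact ih.trans hs.comp_bottom

theorem Run.comp_eq {q p : Q} {w : List (VSym I C R)} (h : Run A (q, []) w (p, [])) :
    A.comp p = A.comp q :=
  h.comp_bottom

theorem Run.exists_split_pop {cfg cfg' : Q × List Q} {w : List (VSym I C R)}
    (h : Run A cfg w cfg') (hcfg' : cfg'.2 = []) {σ : List Q} {s : Q} (hcfg : cfg.2 = σ ++ [s]) :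
    ∃ w₁ f r w₂, w = w₁ ++ VSym.ret r :: w₂ ∧ Run A (cfg.1, σ) w₁ (f, []) ∧
      Step A (f, [s]) (VSym.ret r) (s, []) ∧ Run A (s, []) w₂ cfg' := by
  induction h generalizing σ with
  | nil cfg => simp_all
  | cons hs hr ih =>
    cases hs with
    | int ht =>
      obtain ⟨w₁, f, r, w₂, rfl, h₁, hpop, h₂⟩ := ih hcfg' hcfg
      exact ⟨_ :: w₁, f, r, w₂, rfl, .cons (.int ht) h₁, hpop, h₂⟩
    | @call _ _ p _ _ _ ht hc hcomp hinit =>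
      obtain ⟨w₁, f, r, w₂, rfl, h₁, hpop, h₂⟩ := ih hcfg' (σ := p :: σ) (by simp_all)
      exact ⟨_ :: w₁, f, r, w₂, rfl, .cons (.call ht hc hcomp hinit) h₁, hpop, h₂⟩
    | @ret q p τ _ _ hcomp hfin hlink =>
      obtain _ | ⟨p', σ'⟩ := σ
      · obtain ⟨rfl, rfl⟩ : p = s ∧ τ = [] := by simpa using hcfg
        exact ⟨[], q, _, _, rfl, .nil _, .ret hcomp hfin hlink, by assumption⟩
      · obtain ⟨rfl, rfl⟩ : p = p' ∧ τ = σ' ++ [s] := by simpa using hcfg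
        obtain ⟨w₁, f, r', w₂, rfl, h₁, hpop, h₂⟩ := ih hcfg' (σ := σ') rfl
        exact ⟨_ :: w₁, f, r', w₂, rfl, .cons (.ret hcomp hfin hlink) h₁, hpop, h₂⟩

/-- The key decomposition of a top-level call: `⟨q, ε⟩ →^{c w₁ r} ⟨s, ε⟩` comes from a
transition `q →^K s` with `f(K) = ⟨c, r⟩` and `w₁ ∈ L(A^K)`. -/
theorem Run.exists_recLang_of_call {q p : Q} {c : C} {w : List (VSym I C R)}
    (h : Run A (q, []) (VSym.call c :: w) (p, [])) :
    ∃ K s w₁ r w₂, A.procTrans q K s ∧ A.link K = (c, r) ∧ w = w₁ ++ VSym.ret r :: w₂ ∧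
      w₁ ∈ A.RecLang (some K) ∧ Run A (s, []) w₂ (p, []) := by
  obtain _ | ⟨hs, hr⟩ := h
  cases hs with | @call _ e s _ K _ ht hc hcomp hinit =>
  obtain ⟨w₁, f, r, w₂, rfl, h₁, hpop, h₂⟩ := hr.exists_split_pop rfl (σ := []) rfl
  cases hpop with | @ret _ _ _ K' _ hcomp' hfin hlink =>
  obtain rfl : K' = K := Option.some.inj (hcomp'.symm.trans (h₁.comp_eq.trans hcomp))
  exact ⟨K', s, w₁, r, w₂, ht, Prod.ext hc hlink, rfl, ⟨e, f, hcomp, hinit, hcomp', hfin, h₁⟩, h₂⟩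

theorem Run.not_append_ret {x y q : Q} {cfg : Q × List Q} {u t : List (VSym I C R)} {r : R}
    (hu : Run A (x, []) u (y, [])) : ¬ Run A (q, []) (u ++ VSym.ret r :: t) cfg := by
  intro h
  obtain ⟨⟨m, σ⟩, hum, hrt⟩ := Run.exists_of_append h
  have hσ : σ = [] := by
    have := hu.length_add_countP_isCall
    have := hum.length_add_countP_isCall
    simp_all
  subst hσ
  obtain _ | ⟨hs, _⟩ := hrt
  cases hs

theorem eq_of_append_ret_eq {u u' t t' : List (VSym I C R)} {r r' : R} {x y x' y' : Q}
    (hu : Run A (x, []) u (y, [])) (hu' : Run A (x', []) u' (y', []))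
    (h : u ++ VSym.ret r :: t = u' ++ VSym.ret r' :: t') : u = u' ∧ r = r' ∧ t = t' := by
  obtain ⟨_ | ⟨_, _⟩, rfl, hrest⟩ | ⟨_ | ⟨_, _⟩, rfl, hrest⟩ := List.append_eq_append_iff.mp h
  · simp_all
  · obtain ⟨rfl, rfl⟩ := List.cons_eq_cons.mp hrest
    exact (hu.not_append_ret hu').elim
  · simp_all
  · obtain ⟨rfl, rfl⟩ := List.cons_eq_cons.mp hrest
    exact (hu'.not_append_ret hu).elim

theorem exists_regRun_of_run_of_run
    (hdisj : ∀ (c : C) (r : R) (J J' : P), A.link J = (c, r) → A.link J' = (c, r) →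
      J ≠ J' → A.RegLang (some J) ∩ A.RegLang (some J') = ∅) :
    ∀ {w : List (VSym I C R)} {q₁ p₁ q₂ p₂ : Q},
      Run A (q₁, []) w (p₁, []) → Run A (q₂, []) w (p₂, []) →
      ∃ v, RegRun A q₁ v p₁ ∧ RegRun A q₂ v p₂
  | [], _, _, _, _, .nil _, .nil _ => ⟨[], .nil _, .nil _⟩
  | .int a :: _, _, _, _, _, .cons (.int ht₁) hr₁, .cons (.int ht₂) hr₂ =>
    let ⟨v, hv₁, hv₂⟩ := exists_regRun_of_run_of_run hdisj hr₁ hr₂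
    ⟨.inl a :: v, .int ht₁ hv₁, .int ht₂ hv₂⟩
  | .call c :: _, _, _, _, _, h₁, h₂ => by
    obtain ⟨K₁, s₁, w₁, r, w₂, ht₁, hK₁, hsplit, hw₁, hr₁⟩ := h₁.exists_recLang_of_call
    obtain ⟨K₂, s₂, w₁', r', w₂', ht₂, hK₂, hw, hw₁', hr₂⟩ := h₂.exists_recLang_of_call
    obtain ⟨e₁, f₁, he₁, hi₁, hf₁, hfin₁, hb₁⟩ := hw₁
    obtain ⟨e₂, f₂, he₂, hi₂, hf₂, hfin₂, hb₂⟩ := hw₁'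
    obtain ⟨rfl, rfl, rfl⟩ := eq_of_append_ret_eq hb₁ hb₂ (hsplit.symm.trans hw)
    have hK : K₁ = K₂ := by
      by_contra hne
      obtain ⟨v, hv₁, hv₂⟩ := exists_regRun_of_run_of_run hdisj hb₁ hb₂
      exact (hdisj c r K₁ K₂ hK₁ hK₂ hne).subset
        ⟨⟨e₁, f₁, he₁, hi₁, hf₁, hfin₁, hv₁⟩, ⟨e₂, f₂, he₂, hi₂, hf₂, hfin₂, hv₂⟩⟩
    subst hK
    obtain ⟨v, hv₁, hv₂⟩ := exists_regRun_of_run_of_run hdisj hr₁ hr₂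
    exact ⟨.inr K₁ :: v, .proc ht₁ hv₁, .proc ht₂ hv₂⟩
termination_by w => w.length
decreasing_by all_goals grind

end VRA

/-- if the regular languages of components linked to the same
call/return pair are pairwise disjoint, then so are their recursive languages. -/
theorem VRA.recLang_disjoint_of_regLang_disjoint {I C R P Q : Type}
    (A : VRA I C R P Q)
    (hdisj : ∀ (c : C) (r : R) (J J' : P), A.link J = (c, r) → A.link J' = (c, r) →
      J ≠ J' → A.RegLang (some J) ∩ A.RegLang (some J') = ∅) :
    ∀ (c : C) (r : R) (J J' : P), A.link J = (c, r) → A.link J' = (c, r) →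
      J ≠ J' → A.RecLang (some J) ∩ A.RecLang (some J') = ∅ := by
  intro c r J J' hJ hJ' hne
  refine Set.eq_empty_of_forall_notMem ?_
  rintro w ⟨⟨q₁, f₁, hq₁, hi₁, hf₁, hfin₁, h₁⟩, ⟨q₂, f₂, hq₂, hi₂, hf₂, hfin₂, h₂⟩⟩
  obtain ⟨v, hv₁, hv₂⟩ := exists_regRun_of_run_of_run hdisj h₁ h₂
  exact (hdisj c r J J' hJ hJ' hne).subset
    ⟨⟨q₁, f₁, hq₁, hi₁, hf₁, hfin₁, hv₁⟩, ⟨q₂, f₂, hq₂, hi₂, hf₂, hfin₂, hv₂⟩⟩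
end

section
/- Every VRA A can be transformed into an equivalent codeterministic and complete VRA B, all of whose component automata are complete DFAs, with |B| = 2^{O(|A|)}. In particular, for each pair ⟨c,r⟩, B has one component automaton B^𝒥 for each subset 𝒥 of {J : f(J) = ⟨c,r⟩}, with L(B^𝒥) = ⋂_{J∈𝒥} L(A^J) ∖ ⋃_{J∉𝒥} L(A^J), and these recursive languages partition WM(Σ̂). -/
/-! The automaton `B` is a subset construction run on all components of `A` at once: besides
the label of its component, a state of `B` records the set of states of `A` reachable from the
initial states of `A` by runs that start and end with an empty stack. A matched bracket
`call c, v, ret r` is crossed in `B` through the procedural symbol `(⟨c, r⟩, 𝒥)` for the one set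
`𝒥` of components linked to `⟨c, r⟩` that accept `v`; this is what makes `B` codeterministic
and complete. The induction on well-matched words behind this rests on two facts about `A`: a
run on a well-matched word neither reads nor changes the stack below it and stays in its
component, and an empty-stack run reads a well-matched word. For the size, `B` has
`(|C||R| 2^|P| + 1) 2^|Q|` states, and `|P| ≤ |Q|` because every component has a state. -/

section

variable {I C R : Type}

-- `OpenWellMatched n w`: `w` is a prefix of a well-matched word, with `n` calls still open.
inductive OpenWellMatched : ℕ → List (VSym I C R) → Prop
  | closed {w : List (VSym I C R)} : WellMatched w → OpenWellMatched 0 w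
  | call {n : ℕ} {u v : List (VSym I C R)} (c : C) :
      OpenWellMatched n u → WellMatched v → OpenWellMatched (n + 1) (u ++ .call c :: v)

theorem OpenWellMatched.append {n : ℕ} {u v : List (VSym I C R)}
    (hu : OpenWellMatched n u) (hv : WellMatched v) : OpenWellMatched n (u ++ v) := by
  cases hu with
  | closed hu => exact .closed (hu.concat hv)
  | call c hu hw => simpa using OpenWellMatched.call c hu (hw.concat hv)

theorem OpenWellMatched.wellMatched {w : List (VSym I C R)}
    (h : OpenWellMatched 0 w) : WellMatched w := by
  cases h with
  | closed h => exact h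

end

namespace VRA

variable {I C R P Q : Type} {A : VRA I C R P Q}

theorem Run.nil_iff {c c' : Q × List Q} : Run A c [] c' ↔ c = c' :=
  ⟨fun h => by cases h; rfl, fun h => h ▸ .nil c⟩

theorem Run.cons_iff {c c' : Q × List Q} {a : VSym I C R} {w : List (VSym I C R)} :
    Run A c (a :: w) c' ↔ ∃ c₁, Step A c a c₁ ∧ Run A c₁ w c' :=
  ⟨fun h => by cases h with | cons s r => exact ⟨_, s, r⟩, fun ⟨_, s, r⟩ => .cons s r⟩

theorem Run.append_iff {c₁ c₃ : Q × List Q} {w₁ w₂ : List (VSym I C R)} :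
    Run A c₁ (w₁ ++ w₂) c₃ ↔ ∃ c₂, Run A c₁ w₁ c₂ ∧ Run A c₂ w₂ c₃ := by
  induction w₁ generalizing c₁ with
  | nil => simp [Run.nil_iff]
  | cons a w ih =>
    simp only [List.cons_append, Run.cons_iff, ih]
    exact ⟨fun ⟨c, s, c₂, r₁, r₂⟩ => ⟨c₂, ⟨c, s, r₁⟩, r₂⟩,
      fun ⟨c₂, ⟨c, s, r₁⟩, r₂⟩ => ⟨c, s, c₂, r₁, r₂⟩⟩

theorem Step.append_stack_s12 {c c' : Q × List Q} {a : VSym I C R} (h : Step A c a c')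
    (τ : List Q) : Step A (c.1, c.2 ++ τ) a (c'.1, c'.2 ++ τ) := by
  cases h with
  | int h => exact .int h
  | call h₁ h₂ h₃ h₄ => exact .call h₁ h₂ h₃ h₄
  | ret h₁ h₂ h₃ => exact .ret h₁ h₂ h₃

theorem Run.append_stack_s12 {c c' : Q × List Q} {w : List (VSym I C R)} (h : Run A c w c')
    (τ : List Q) : Run A (c.1, c.2 ++ τ) w (c'.1, c'.2 ++ τ) := by
  induction h with
  | nil => exact .nil _
  | cons s _ ih => exact .cons (s.append_stack_s12 τ) ih

theorem Run.bracket {q p : Q} {J : P} {c : C} {r : R} {v : List (VSym I C R)}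
    (ht : A.procTrans q J p) (hl : A.link J = (c, r)) (hv : v ∈ A.RecLang (some J))
    (σ : List Q) : Run A (q, σ) (.call c :: v ++ [.ret r]) (p, σ) := by
  obtain ⟨qi, qf, hci, hii, hcf, hff, hrun⟩ := hv
  refine .cons (.call ht (by rw [hl]) hci hii) (Run.append_iff.mpr ⟨(qf, p :: σ), ?_, ?_⟩)
  · simpa using hrun.append_stack_s12 (p :: σ)
  · exact .cons (.ret hcf hff (by rw [hl])) (.nil _)

-- `hv` is the conclusion of `Run.of_wellMatched` for `v`, so that this lemma can be used in the
-- induction proving it.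
theorem Run.bracket_inv {q q' : Q} {σ σ' : List Q} {c : C} {r : R} {v : List (VSym I C R)}
    (hv : ∀ {qi qf : Q} {τ τ' : List Q}, Run A (qi, τ) v (qf, τ') →
      τ' = τ ∧ A.comp qf = A.comp qi ∧ Run A (qi, []) v (qf, []))
    (h : Run A (q, σ) (.call c :: v ++ [.ret r]) (q', σ')) :
    σ' = σ ∧ ∃ J, A.link J = (c, r) ∧ v ∈ A.RecLang (some J) ∧ A.procTrans q J q' := by
  rw [List.cons_append, Run.cons_iff] at h
  obtain ⟨_, s, h⟩ := h
  cases s with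
  | call ht hc hci hii =>
    obtain ⟨⟨qf, τ⟩, hrun, h⟩ := Run.append_iff.mp h
    obtain ⟨rfl, hcf, hrun⟩ := hv hrun
    obtain ⟨_, s, h⟩ := Run.cons_iff.mp h
    cases s with
    | ret hcf' hff hr =>
      obtain ⟨rfl, rfl⟩ := Prod.mk.inj (Run.nil_iff.mp h)
      obtain rfl : _ = _ := Option.some.inj (hcf'.symm.trans (hcf.trans hci))
      exact ⟨rfl, _, Prod.ext hc hr, ⟨_, qf, hci, hii, hcf', hff, hrun⟩, ht⟩

theorem Run.of_wellMatched {w : List (VSym I C R)} (hw : WellMatched w) {q q' : Q}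
    {σ σ' : List Q} (h : Run A (q, σ) w (q', σ')) :
    σ' = σ ∧ A.comp q' = A.comp q ∧ Run A (q, []) w (q', []) := by
  induction hw generalizing q σ q' σ' with
  | internal u =>
    induction u generalizing q σ with
    | nil =>
      obtain ⟨rfl, rfl⟩ := Prod.mk.inj (Run.nil_iff.mp h)
      exact ⟨rfl, rfl, .nil _⟩
    | cons a u ih =>
      obtain ⟨_, s, h⟩ := Run.cons_iff.mp h
      cases s with
      | int ht =>
        obtain ⟨rfl, hc, h⟩ := ih h
        exact ⟨rfl, hc.trans (A.intTrans_comp ht), .cons (.int ht) h⟩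
  | bracket c r _ ih =>
    obtain ⟨rfl, J, hl, hJ, ht⟩ := Run.bracket_inv ih h
    exact ⟨rfl, A.procTrans_comp ht, Run.bracket ht hl hJ []⟩
  | concat _ _ ih₁ ih₂ =>
    obtain ⟨⟨q₁, σ₁⟩, h₁, h₂⟩ := Run.append_iff.mp h
    obtain ⟨rfl, hc₁, r₁⟩ := ih₁ h₁
    obtain ⟨rfl, hc₂, r₂⟩ := ih₂ h₂
    exact ⟨rfl, hc₂.trans hc₁, Run.append_iff.mpr ⟨_, r₁, r₂⟩⟩

theorem run_bracket_iff_s12 {v : List (VSym I C R)} (hv : WellMatched v) {q q' : Q} {c : C}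
    {r : R} : Run A (q, []) (.call c :: v ++ [.ret r]) (q', []) ↔
      ∃ J, A.link J = (c, r) ∧ v ∈ A.RecLang (some J) ∧ A.procTrans q J q' :=
  ⟨fun h => (Run.bracket_inv (·.of_wellMatched hv) h).2,
    fun ⟨_, hl, hJ, ht⟩ => Run.bracket ht hl hJ []⟩

theorem Run.openWellMatched {q q' : Q} {σ : List Q} {w : List (VSym I C R)}
    (h : Run A (q, []) w (q', σ)) : OpenWellMatched σ.length w := by
  induction w using List.reverseRecOn generalizing q' σ with
  | nil =>
    obtain ⟨rfl, rfl⟩ := Prod.mk.inj (Run.nil_iff.mp h)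
    exact .closed (.internal [])
  | append_singleton w a ih =>
    obtain ⟨⟨q₁, σ₁⟩, hw, ha⟩ := Run.append_iff.mp h
    obtain ⟨_, s, hn⟩ := Run.cons_iff.mp ha
    obtain rfl := Run.nil_iff.mp hn
    cases s with
    | int _ => exact (ih hw).append (.internal [_])
    | call _ _ _ _ => exact .call _ (ih hw) (.internal [])
    | ret _ _ _ =>
      cases ih hw with
      | call c hu hv => simpa using hu.append (hv.bracket c _)

theorem Run.wellMatched {q q' : Q} {w : List (VSym I C R)} (h : Run A (q, []) w (q', [])) :
    WellMatched w :=
  h.openWellMatched.wellMatched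

def finalComps (A : VRA I C R P Q) (S : Set Q) : Set (Option P) :=
  {J | ∃ q ∈ S, A.comp q = J ∧ A.final q}

def initStates (A : VRA I C R P Q) : Set Q := {q | A.init q}

def reach (A : VRA I C R P Q) (S : Set Q) (w : List (VSym I C R)) : Set Q :=
  {q' | ∃ q ∈ S, Run A (q, []) w (q', [])}

theorem mem_recLang_iff {J : Option P} {w : List (VSym I C R)} :
    w ∈ A.RecLang J ↔ WellMatched w ∧ J ∈ A.finalComps (A.reach A.initStates w) := by
  constructor
  · rintro ⟨qi, qf, -, hii, hcf, hff, h⟩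
    exact ⟨h.wellMatched, qf, ⟨qi, hii, h⟩, hcf, hff⟩
  · rintro ⟨hw, qf, ⟨qi, hii, h⟩, hcf, hff⟩
    exact ⟨qi, qf, (h.of_wellMatched hw).2.1.symm.trans hcf, hii, hcf, hff, h⟩

def succInt (A : VRA I C R P Q) (S : Set Q) (a : I) : Set Q :=
  {p | ∃ q ∈ S, A.intTrans q a p}

def succProc (A : VRA I C R P Q) (S : Set Q) (K : (C × R) × Set P) : Set Q :=
  {p | ∃ q ∈ S, ∃ J ∈ K.2, A.procTrans q J p}

def acceptingLinked (A : VRA I C R P Q) (cr : C × R) (w : List (VSym I C R)) : Set P :=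
  {J | A.link J = cr ∧ w ∈ A.RecLang (some J)}

theorem acceptingLinked_eq {w : List (VSym I C R)} (hw : WellMatched w) (cr : C × R) :
    A.acceptingLinked cr w =
      {J | A.link J = cr ∧ some J ∈ A.finalComps (A.reach A.initStates w)} := by
  simp only [acceptingLinked, mem_recLang_iff, hw, true_and]

theorem reach_nil (S : Set Q) : A.reach S ([] : List (VSym I C R)) = S := by
  ext q'
  simp [reach, Run.nil_iff]

theorem reach_int_cons (S : Set Q) (a : I) (w : List (VSym I C R)) :
    A.reach S (.int a :: w) = A.reach (A.succInt S a) w := by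
  ext q'
  constructor
  · rintro ⟨q, hq, h⟩
    obtain ⟨_, s, h⟩ := Run.cons_iff.mp h
    cases s with
    | int ht => exact ⟨_, ⟨q, hq, ht⟩, h⟩
  · rintro ⟨p, ⟨q, hq, ht⟩, h⟩
    exact ⟨q, hq, .cons (.int ht) h⟩

theorem reach_append {w₁ : List (VSym I C R)} (hw : WellMatched w₁) (S : Set Q)
    (w₂ : List (VSym I C R)) : A.reach S (w₁ ++ w₂) = A.reach (A.reach S w₁) w₂ := by
  ext q'
  constructor
  · rintro ⟨q, hq, h⟩
    obtain ⟨⟨q₁, σ₁⟩, h₁, h₂⟩ := Run.append_iff.mp h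
    obtain ⟨rfl, -⟩ := h₁.of_wellMatched hw
    exact ⟨q₁, ⟨q, hq, h₁⟩, h₂⟩
  · rintro ⟨q₁, ⟨q, hq, h₁⟩, h₂⟩
    exact ⟨q, hq, Run.append_iff.mpr ⟨_, h₁, h₂⟩⟩

theorem reach_bracket {v : List (VSym I C R)} (hv : WellMatched v) (S : Set Q) (c : C)
    (r : R) : A.reach S (.call c :: v ++ [.ret r]) =
      A.succProc S ((c, r), A.acceptingLinked (c, r) v) := by
  ext p
  simp only [reach, succProc, acceptingLinked, run_bracket_iff_s12 hv, Set.mem_ofPred_eq]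
  grind

def determinize (A : VRA I C R P Q) :
    VRA I C R ((C × R) × Set P) (Option ((C × R) × Set P) × Set Q) where
  link K := K.1
  comp x := x.1
  init x := x.2 = A.initStates
  final
    | (none, S) => none ∈ A.finalComps S
    | (some K, S) => K.2 = {J | A.link J = K.1 ∧ some J ∈ A.finalComps S}
  intTrans x a y := y = (x.1, A.succInt x.2 a)
  procTrans x K y := y = (x.1, A.succProc x.2 K)
  intTrans_comp := by rintro _ _ _ rfl; rfl
  procTrans_comp := by rintro _ _ _ rfl; rfl

theorem mem_recLang_determinize_of {w : List (VSym I C R)}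
    (hrun : ∀ x y, Run A.determinize (x, []) w (y, []) ↔ y = (x.1, A.reach x.2 w))
    (K : Option ((C × R) × Set P)) :
    w ∈ A.determinize.RecLang K ↔ A.determinize.final (K, A.reach A.initStates w) := by
  constructor
  · rintro ⟨⟨K', S⟩, y, rfl, rfl, -, hy, h⟩
    rwa [(hrun _ _).mp h] at hy
  · exact fun hf => ⟨(K, A.initStates), _, rfl, rfl, rfl, hf, (hrun _ _).mpr rfl⟩

theorem run_determinize_iff {w : List (VSym I C R)} (hw : WellMatched w)
    (x y : Option ((C × R) × Set P) × Set Q) :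
    Run A.determinize (x, []) w (y, []) ↔ y = (x.1, A.reach x.2 w) := by
  induction hw generalizing x y with
  | internal u =>
    induction u generalizing x with
    | nil => simp [Run.nil_iff, reach_nil, eq_comm]
    | cons a u ih =>
      rw [List.map_cons, Run.cons_iff, reach_int_cons]
      constructor
      · rintro ⟨_, s, h⟩
        cases s with
        | int ht => subst ht; exact (ih _).mp h
      · exact fun hy => ⟨_, .int rfl, (ih _).mpr hy⟩
  | @bracket v c r hv ih =>
    have hK : ∀ K : (C × R) × Set P,
        v ∈ A.determinize.RecLang (some K) ↔ K.2 = A.acceptingLinked K.1 v := fun K => by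
      rw [mem_recLang_determinize_of ih, acceptingLinked_eq hv]
      rfl
    rw [run_bracket_iff_s12 hv, reach_bracket hv]
    constructor
    · rintro ⟨⟨cr, 𝒥⟩, rfl, hv', rfl⟩
      obtain rfl : 𝒥 = A.acceptingLinked (c, r) v := (hK _).mp hv'
      rfl
    · rintro rfl
      exact ⟨_, rfl, (hK _).mpr rfl, rfl⟩
  | concat hw₁ _ ih₁ ih₂ =>
    rw [Run.append_iff, reach_append hw₁]
    constructor
    · rintro ⟨⟨x₁, σ₁⟩, h₁, h₂⟩
      obtain ⟨rfl, -⟩ := h₁.of_wellMatched hw₁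
      obtain rfl := (ih₁ _ _).mp h₁
      exact (ih₂ _ _).mp h₂
    · exact fun hy => ⟨_, (ih₁ _ _).mpr rfl, (ih₂ _ _).mpr hy⟩

theorem mem_recLang_determinize {w : List (VSym I C R)} {K : Option ((C × R) × Set P)} :
    w ∈ A.determinize.RecLang K ↔
      WellMatched w ∧ A.determinize.final (K, A.reach A.initStates w) := by
  constructor
  · intro h
    have hw := (mem_recLang_iff.mp h).1
    exact ⟨hw, (mem_recLang_determinize_of (run_determinize_iff hw) K).mp h⟩
  · exact fun ⟨hw, hf⟩ => (mem_recLang_determinize_of (run_determinize_iff hw) K).mpr hf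

theorem lang_determinize : A.determinize.Lang = A.Lang := by
  ext w
  exact mem_recLang_determinize.trans mem_recLang_iff.symm

theorem recLang_determinize_some (K : (C × R) × Set P) :
    A.determinize.RecLang (some K) = {w | WellMatched w ∧ K.2 = A.acceptingLinked K.1 w} := by
  ext w
  rw [mem_recLang_determinize]
  exact and_congr_right fun hw => by rw [acceptingLinked_eq hw]; rfl

theorem codeterministic_determinize : A.determinize.Codeterministic := by
  intro K K' hne hl
  ext w
  simp only [recLang_determinize_some, Set.mem_inter_iff, Set.mem_ofPred_eq,
    Set.mem_empty_iff_false, iff_false]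
  rintro ⟨⟨-, h⟩, -, h'⟩
  have hl : K.1 = K'.1 := hl
  exact hne (Prod.ext hl (by rw [h, h', hl]))

theorem complete_determinize : A.determinize.Complete := by
  refine ⟨fun _ _ => ⟨_, rfl⟩, fun _ _ => ⟨_, rfl⟩, fun c r => ?_⟩
  ext w
  simp only [Set.mem_iUnion, recLang_determinize_some, Set.mem_ofPred_eq, exists_prop]
  exact ⟨fun ⟨_, _, hw, _⟩ => hw,
    fun hw => ⟨((c, r), A.acceptingLinked (c, r) w), rfl, hw, rfl⟩⟩

theorem allCompleteDFA_determinize : A.determinize.AllCompleteDFA :=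
  ⟨fun K => ⟨(K, A.initStates), ⟨rfl, rfl⟩, fun _ ⟨hK, hS⟩ => Prod.ext hK hS⟩,
    fun _ _ => ⟨_, rfl, fun _ h => h⟩, fun _ _ => ⟨_, rfl, fun _ h => h⟩⟩

theorem recLang_determinize_eq {c : C} {r : R} {𝒥 : Set P}
    (h𝒥 : 𝒥 ⊆ {J : P | A.link J = (c, r)}) :
    A.determinize.RecLang (some ((c, r), 𝒥)) =
      ({w | WellMatched w} ∩ ⋂ J ∈ 𝒥, A.RecLang (some J)) \
        ⋃ J ∈ {J : P | A.link J = (c, r)} \ 𝒥, A.RecLang (some J) := by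
  ext w
  simp only [recLang_determinize_some, acceptingLinked, Set.ext_iff, Set.mem_ofPred_eq,
    Set.mem_sdiff, Set.mem_inter_iff, Set.mem_iInter, Set.mem_iUnion, not_exists]
  constructor
  · rintro ⟨hw, h⟩
    exact ⟨⟨hw, fun J hJ => ((h J).mp hJ).2⟩,
      fun J ⟨hl, hJ⟩ hwJ => hJ ((h J).mpr ⟨hl, hwJ⟩)⟩
  · rintro ⟨⟨hw, hin⟩, hout⟩
    refine ⟨hw, fun J => ⟨fun hJ => ⟨h𝒥 hJ, hin J hJ⟩, fun ⟨hl, hwJ⟩ => ?_⟩⟩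
    by_contra hJ
    exact hout J ⟨hl, hJ⟩ hwJ

end VRA

theorem natCard_graph {α β γ : Type} (T : α → β → γ → Prop) {f : α → β → γ}
    (hT : ∀ a b c, T a b c ↔ c = f a b) :
    Nat.card {t : α × β × γ // T t.1 t.2.1 t.2.2} = Nat.card α * Nat.card β := by
  rw [← Nat.card_prod]
  exact Nat.card_congr
    { toFun t := (t.1.1, t.1.2.1)
      invFun x := ⟨(x.1, x.2, f x.1 x.2), (hT _ _ _).mpr rfl⟩
      left_inv := fun ⟨⟨_, _, _⟩, h⟩ =>
        Subtype.ext (Prod.ext rfl (Prod.ext rfl ((hT _ _ _).mp h).symm))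
      right_inv _ := rfl }

theorem natCard_set (α : Type) [Finite α] : Nat.card (Set α) = 2 ^ Nat.card α := by
  classical
  have := Fintype.ofFinite α
  simp [Nat.card_eq_fintype_card, Fintype.card_set]

namespace VRA

variable {I C R P Q : Type} {A : VRA I C R P Q}

theorem size_determinize :
    A.determinize.size = Nat.card (Option ((C × R) × Set P) × Set Q) *
      (1 + Nat.card I + Nat.card ((C × R) × Set P)) := by
  rw [size, natCard_graph A.determinize.intTrans fun _ _ _ => Iff.rfl,
    natCard_graph A.determinize.procTrans fun _ _ _ => Iff.rfl]
  ring

theorem size_determinize_le [Finite C] [Finite R] [Finite P] [Finite Q] {n : ℕ}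
    (hP : Nat.card P ≤ n) (hQ : Nat.card Q ≤ n) :
    A.determinize.size ≤ (Nat.card C * Nat.card R + 1) *
      (Nat.card I + Nat.card C * Nat.card R + 1) * 2 ^ (3 * n) := by
  rw [size_determinize]
  simp only [Nat.card_prod, Finite.card_option, natCard_set]
  set m := Nat.card C * Nat.card R
  have hP' : 2 ^ Nat.card P ≤ 2 ^ n := Nat.pow_le_pow_right two_pos hP
  have hQ' : 2 ^ Nat.card Q ≤ 2 ^ n := Nat.pow_le_pow_right two_pos hQ
  have hn : 1 ≤ 2 ^ n := Nat.one_le_two_pow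
  calc (m * 2 ^ Nat.card P + 1) * 2 ^ Nat.card Q * (1 + Nat.card I + m * 2 ^ Nat.card P)
      ≤ ((m + 1) * 2 ^ n) * 2 ^ n * ((Nat.card I + m + 1) * 2 ^ n) := by
        gcongr <;> nlinarith
    _ = (m + 1) * (Nat.card I + m + 1) * 2 ^ (3 * n) := by ring

theorem natCard_le_natCard_of_forall_comp [Finite Q] (h : ∀ J : P, ∃ q, A.comp q = some J) :
    Nat.card P ≤ Nat.card Q := by
  choose g hg using h
  exact Nat.card_le_card_of_injective g fun J J' e =>
    Option.some.inj ((hg J).symm.trans (e ▸ hg J'))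

theorem natCard_le_size (A : VRA I C R P Q) : Nat.card Q ≤ A.size :=
  (Nat.le_add_right _ _).trans (Nat.le_add_right _ _)

end VRA

theorem VRA.exists_codet_complete_equiv_general (I C R : Type) [Finite C] [Finite R] :
    ∃ k : ℕ, ∀ (P Q : Type) [Finite P] [Finite Q] (A : VRA I C R P Q),
      (∀ J : P, ∃ q, A.comp q = some J) →
      ∃ (Q' : Type) (_ : Finite Q') (B : VRA I C R ((C × R) × Set P) Q'),
        B.Lang = A.Lang ∧
        B.Codeterministic ∧
        B.Complete ∧
        B.AllCompleteDFA ∧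
        (∀ p : (C × R) × Set P, B.link p = p.1) ∧
        (∀ (c : C) (r : R) (𝒥 : Set P), 𝒥 ⊆ {J : P | A.link J = (c, r)} →
          B.RecLang (some ((c, r), 𝒥)) =
            ({w | WellMatched w} ∩ ⋂ J ∈ 𝒥, A.RecLang (some J)) \
              ⋃ J ∈ {J : P | A.link J = (c, r)} \ 𝒥, A.RecLang (some J)) ∧
        B.size ≤ k * 2 ^ (k * A.size) := by
  set a := (Nat.card C * Nat.card R + 1) * (Nat.card I + Nat.card C * Nat.card R + 1)
  refine ⟨a + 3, fun P Q _ _ A hcomp => ⟨_, inferInstance, A.determinize, lang_determinize,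
    codeterministic_determinize, complete_determinize, allCompleteDFA_determinize,
    fun _ => rfl, fun _ _ _ => recLang_determinize_eq, ?_⟩⟩
  have hQ := A.natCard_le_size
  calc A.determinize.size ≤ a * 2 ^ (3 * A.size) :=
        size_determinize_le ((natCard_le_natCard_of_forall_comp hcomp).trans hQ) hQ
    _ ≤ (a + 3) * 2 ^ ((a + 3) * A.size) := by gcongr <;> omega

/-- every (finite) VRA `A` is equivalent to a codeterministic,
complete VRA `B` of size `2^{O(|A|)}`, all of whose component automata are
complete DFAs; `B` has, for each pair `⟨c,r⟩`, one component for each subset `𝒥`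
of `{J : f(J) = ⟨c,r⟩}`, whose recursive language is
`⋂_{J∈𝒥} L(A^J) ∖ ⋃_{J∉𝒥} L(A^J)` (the empty intersection being `WM(Σ̂)`);
these languages partition `WM(Σ̂)`. -/
theorem VRA.exists_codet_complete_equiv (I C R : Type) [Finite I] [Finite C] [Finite R] :
    ∃ k : ℕ, ∀ (P Q : Type) [Finite P] [Finite Q] (A : VRA I C R P Q),
      (∀ J : P, ∃ q, A.comp q = some J) →
      ∃ (Q' : Type) (_ : Finite Q') (B : VRA I C R ((C × R) × Set P) Q'),
        B.Lang = A.Lang ∧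
        B.Codeterministic ∧
        B.Complete ∧
        B.AllCompleteDFA ∧
        (∀ p : (C × R) × Set P, B.link p = p.1) ∧
        (∀ (c : C) (r : R) (𝒥 : Set P), 𝒥 ⊆ {J : P | A.link J = (c, r)} →
          B.RecLang (some ((c, r), 𝒥)) =
            ({w | WellMatched w} ∩ ⋂ J ∈ 𝒥, A.RecLang (some J)) \
              ⋃ J ∈ {J : P | A.link J = (c, r)} \ 𝒥, A.RecLang (some J)) ∧
        B.size ≤ k * 2 ^ (k * A.size) :=
  VRA.exists_codet_complete_equiv_general I C R
end
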